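/- Assume (A.1)–(A.4). If A∈𝒳 satisfies Π_k 1_A = 1_A π-a.e. for every k=1,…,K, then π(A) ∈ {0,1}. -/

import Mathlib

open MeasureTheory ProbabilityTheory Filter Matrix
open scoped BoundedContinuousFunction ENNReal

noncomputable section

variable {X : Type*} [MeasurableSpace X]

/-- Action of a kernel on a (vector-valued) function: `Πf(x) = ∫ f(y) Π(x,dy)`. -/
def kApp {E : Type*} [NormedAddCommGroup E] [NormedSpace ℝ E]
    (κ : Kernel X X) (f : X → E) (x : X) : E := ∫ y, f y ∂(κ x)

/-- `sweepOp Ks t k f = P_k^t f`, the length-`t` sweep composition starting at index `k`,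
acting on functions. -/
def sweepOp {E : Type*} [NormedAddCommGroup E] [NormedSpace ℝ E]
    (Ks : ℕ → Kernel X X) : ℕ → ℕ → (X → E) → X → E
  | 0, _, f => f
  | (t+1), k, f => kApp (Ks k) (sweepOp Ks t (k+1) f)

/-- `sweepKer Ks t k = P_k^t` as a kernel. -/
def sweepKer (Ks : ℕ → Kernel X X) : ℕ → ℕ → Kernel X X
  | 0, _ => Kernel.id
  | (t+1), k => (sweepKer Ks t (k+1)) ∘ₖ (Ks k)

/-- `m`-fold iterate of a kernel. -/
def kpow (κ : Kernel X X) : ℕ → Kernel X X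
  | 0 => Kernel.id
  | (m+1) => κ ∘ₖ kpow κ m

/-- `π`-stationarity of a kernel. -/
def IsStationaryKernel (π : Measure X) (κ : Kernel X X) : Prop :=
  ∀ A : Set X, MeasurableSet A → ∫⁻ x, κ x A ∂π = π A

/-- A Gibbs kernel with respect to `π`: a regular conditional distribution kernel
with respect to some sub-σ-algebra. -/
def IsGibbsKernel (π : Measure X) (κ : Kernel X X) : Prop :=
  ∃ m : MeasurableSpace X, m ≤ ‹MeasurableSpace X› ∧
    ∀ A : Set X, MeasurableSet A →
      (fun x => (κ x A).toReal) =ᵐ[π] π[A.indicator (fun _ => (1:ℝ)) | m]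

/-- A small set for a kernel. -/
def IsSmallSet (κ : Kernel X X) (C : Set X) : Prop :=
  ∃ m : ℕ, 1 ≤ m ∧ ∃ νm : Measure X, νm ≠ 0 ∧
    ∀ x ∈ C, ∀ B : Set X, MeasurableSet B → νm B ≤ (kpow κ m) x B

/-- Geometric drift condition (A.3) for the `K`-step composition starting at `k`,
with drift function `V`. -/
def GeoDrift (Ks : ℕ → Kernel X X) (K k : ℕ) (V : X → ℝ) : Prop :=
  Measurable V ∧ (∀ x, 1 ≤ V x) ∧
  ∃ C : Set X, MeasurableSet C ∧ IsSmallSet (sweepKer Ks K k) C ∧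
  ∃ lam b : ℝ, lam < 1 ∧
    (∀ x, Integrable V ((sweepKer Ks K k) x)) ∧
    (∀ x, kApp (sweepKer Ks K k) V x ≤ lam * V x + b * C.indicator (fun _ => (1:ℝ)) x)

/-- ψ-irreducibility (A.2). -/
def SweepIrreducible (Ks : ℕ → Kernel X X) (K : ℕ) (ψ : Measure X) : Prop :=
  ∀ k < K, ∀ A : Set X, MeasurableSet A → 0 < ψ A → ∀ x : X,
    ∃ t : ℕ, 1 ≤ t ∧ 0 < (sweepKer Ks (K * t) k) x A

/-- Aperiodicity (A.4) of the composition kernel `P_k^K`, relative to ψ. -/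
def IsAperiodic (Ks : ℕ → Kernel X X) (K k : ℕ) (ψ : Measure X) : Prop :=
  ¬ ∃ d : ℕ, 2 ≤ d ∧ ∃ D : ℕ → Set X,
    (∀ i < d, MeasurableSet (D i)) ∧
    (∀ i < d, ∀ j < d, i ≠ j → Disjoint (D i) (D j)) ∧
    (∀ i < d, ∀ x ∈ D i, (sweepKer Ks K k) x (D ((i+1) % d)) = 1) ∧
    ψ ((⋃ i ∈ Finset.range d, D i)ᶜ) = 0

/-- The Poisson-equation solution `ĝ_k = ∑_{t≥0} P_k^t g` (defined as a pointwise tsum). -/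
def ghat {d : ℕ} (Ks : ℕ → Kernel X X) (g : X → Fin d → ℝ) (k : ℕ) (x : X) :
    Fin d → ℝ := fun i => ∑' t : ℕ, sweepOp Ks t k g x i

/-- The matrix `∫ π(dx) u(x) v(x)ᵀ`. -/
def covMat {d e : ℕ} (π : Measure X) (u : X → Fin d → ℝ) (v : X → Fin e → ℝ) :
    Matrix (Fin d) (Fin e) ℝ :=
  Matrix.of fun i j => ∫ x, u x i * v x j ∂π

/-- The matrix `U_k = ∫ π(dx){ffᵀ − (Π_k f)(Π_k f)ᵀ}`. -/
def Umat {p : ℕ} (π : Measure X) (Ks : ℕ → Kernel X X) (f : X → Fin p → ℝ) (k : ℕ) :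
    Matrix (Fin p) (Fin p) ℝ :=
  covMat π f f - covMat π (kApp (Ks k) f) (kApp (Ks k) f)

/-- The matrix `V_k = ∫ π(dx){f ĝ_{σ(k)}ᵀ − (Π_k f)(Π_k ĝ_{σ(k)})ᵀ}`. -/
def Vmat {p d : ℕ} (π : Measure X) (Ks : ℕ → Kernel X X) (f : X → Fin p → ℝ)
    (g : X → Fin d → ℝ) (k : ℕ) : Matrix (Fin p) (Fin d) ℝ :=
  covMat π f (ghat Ks g (k+1))
    - covMat π (kApp (Ks k) f) (kApp (Ks k) (ghat Ks g (k+1)))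

/-- The common part of the asymptotic variance:
`∫π g gᵀ + K⁻¹ ∑_k ∑_{t≥1} ∫π {g (P_k^t g)ᵀ + (P_k^t g) gᵀ}`. -/
def sigmaBase {d : ℕ} (π : Measure X) (Ks : ℕ → Kernel X X) (K : ℕ)
    (g : X → Fin d → ℝ) : Matrix (Fin d) (Fin d) ℝ :=
  covMat π g g + (K : ℝ)⁻¹ • ∑ k ∈ Finset.range K, ∑' t : ℕ,
    (covMat π g (sweepOp Ks (t+1) k g) + covMat π (sweepOp Ks (t+1) k g) g)

/-- The σ-algebra generated by `X_0, …, X_t`. -/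
def past {Ω : Type*} (Xt : ℕ → Ω → X) (t : ℕ) : MeasurableSpace Ω :=
  ⨆ i ∈ Finset.range (t+1), MeasurableSpace.comap (Xt i) ‹MeasurableSpace X›

/-- A (time-inhomogeneous) Markov chain with initial law `ν` that at time `t` uses the
transition kernel `Ks t` to generate `X_{t+1}` from `X_t`. -/
structure SweepChain {Ω : Type*} [MeasurableSpace Ω] (Ks : ℕ → Kernel X X)
    (ν : Measure X) (P : Measure Ω) (Xt : ℕ → Ω → X) : Prop where
  meas : ∀ t, Measurable (Xt t)
  init : P.map (Xt 0) = ν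
  markov : ∀ t, ∀ A : Set X, MeasurableSet A →
    (P[fun ω => A.indicator (fun _ => (1:ℝ)) (Xt (t+1) ω) | past Xt t])
      =ᵐ[P] fun ω => ((Ks t) (Xt t ω) A).toReal

/-- `M^{-1/2} S_M` converges in distribution to a centered Gaussian limit with
covariance matrix `Sig` (identified through its characteristic function). -/
def GaussLimit {Ω : Type*} [MeasurableSpace Ω] {d : ℕ} (P : Measure Ω)
    (S : ℕ → Ω → Fin d → ℝ) (Sig : Matrix (Fin d) (Fin d) ℝ) : Prop :=
  ∃ μZ : Measure (Fin d → ℝ), IsProbabilityMeasure μZ ∧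
    (∀ u : Fin d → ℝ,
      ∫ z, Complex.exp (Complex.I * ((∑ i, u i * z i : ℝ) : ℂ)) ∂μZ
        = Complex.exp (-(((u ⬝ᵥ Sig.mulVec u : ℝ) : ℂ)) / 2)) ∧
    ∀ φ : (Fin d → ℝ) →ᵇ ℝ,
      Tendsto (fun M : ℕ => ∫ ω, φ ((M : ℝ) ^ (-(1:ℝ)/2) • S M ω) ∂P) atTop
        (nhds (∫ z, φ z ∂μZ))


/-- The averaged matrix `U = K⁻¹ ∑_k U_k`. -/
def Ubar {p : ℕ} (π : Measure X) (Ks : ℕ → Kernel X X) (K : ℕ)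
    (f : X → Fin p → ℝ) : Matrix (Fin p) (Fin p) ℝ :=
  (K : ℝ)⁻¹ • ∑ k ∈ Finset.range K, Umat π Ks f k

/-- The averaged matrix `V = K⁻¹ ∑_k V_k`. -/
def Vbar {p d : ℕ} (π : Measure X) (Ks : ℕ → Kernel X X) (K : ℕ)
    (f : X → Fin p → ℝ) (g : X → Fin d → ℝ) : Matrix (Fin p) (Fin d) ℝ :=
  (K : ℝ)⁻¹ • ∑ k ∈ Finset.range K, Vmat π Ks f g k

/-- Asymptotic variance `Σ_C` of the general (per-component weight) control variate scheme. -/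
def sigmaCvar {p d : ℕ} (π : Measure X) (Ks : ℕ → Kernel X X) (K : ℕ)
    (f : X → Fin p → ℝ) (g : X → Fin d → ℝ)
    (Cs : ℕ → Matrix (Fin p) (Fin d) ℝ) : Matrix (Fin d) (Fin d) ℝ :=
  sigmaBase π Ks K g + (K : ℝ)⁻¹ • ∑ k ∈ Finset.range K,
    ((Cs (k+1))ᵀ * Umat π Ks f k * Cs (k+1)
      - (Cs (k+1))ᵀ * Vmat π Ks f g k - (Vmat π Ks f g k)ᵀ * Cs (k+1))

/-- Asymptotic variance `Σ_C` of the fixed-weight control variate scheme. -/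
def sigmaCfix {p d : ℕ} (π : Measure X) (Ks : ℕ → Kernel X X) (K : ℕ)
    (f : X → Fin p → ℝ) (g : X → Fin d → ℝ)
    (C : Matrix (Fin p) (Fin d) ℝ) : Matrix (Fin d) (Fin d) ℝ :=
  sigmaBase π Ks K g
    + (Cᵀ * Ubar π Ks K f * C - Cᵀ * Vbar π Ks K f g - (Vbar π Ks K f g)ᵀ * C)


lemma sweepKer_markov (Ks : ℕ → Kernel X X) [∀ k, IsMarkovKernel (Ks k)] :
    ∀ t k, IsMarkovKernel (sweepKer Ks t k)
  | 0, k => by simp only [sweepKer]; infer_instance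
  | (t+1), k => by
      have := sweepKer_markov Ks t (k+1)
      simp only [sweepKer]; infer_instance

lemma sweep_fix_key (Ks : ℕ → Kernel X X) [∀ k, IsMarkovKernel (Ks k)]
    (π : Measure X) [IsProbabilityMeasure π]
    (hstat : ∀ k, IsStationaryKernel π (Ks k))
    (A : Set X) (hA : MeasurableSet A)
    (hfix' : ∀ k, (fun x => (Ks k) x A) =ᵐ[π] A.indicator (fun _ => (1:ℝ≥0∞))) :
    ∀ t k, (fun x => (sweepKer Ks t k) x A) =ᵐ[π] A.indicator (fun _ => (1:ℝ≥0∞)) := by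
  intro t
  induction t with
  | zero =>
      intro k
      refine Filter.Eventually.of_forall fun x => ?_
      simp only [sweepKer, Kernel.id_apply, Measure.dirac_apply' _ hA]
      rfl
  | succ t ih =>
      intro k
      set N := toMeasurable π {x | ¬ (sweepKer Ks t (k+1)) x A = A.indicator (fun _ => (1:ℝ≥0∞)) x} with hN
      have hNmeas : MeasurableSet N := measurableSet_toMeasurable _ _
      have hNnull : π N = 0 := by
        rw [measure_toMeasurable]
        exact ae_iff.mp (ih (k+1))
      have hzero : (fun x => (Ks k) x N) =ᵐ[π] 0 := by
        rw [← lintegral_eq_zero_iff (Kernel.measurable_coe _ hNmeas)]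
        rw [hstat k N hNmeas, hNnull]
      filter_upwards [hzero, hfix' k] with x hx1 hx2
      have hcomp : (sweepKer Ks (t+1) k) x A = ∫⁻ y, (sweepKer Ks t (k+1)) y A ∂((Ks k) x) := by
        simp only [sweepKer]
        exact Kernel.comp_apply' _ _ _ hA
      have hae : ∀ᵐ y ∂((Ks k) x),
          (sweepKer Ks t (k+1)) y A = A.indicator (fun _ => (1:ℝ≥0∞)) y :=
        ae_iff.mpr (measure_mono_null (subset_toMeasurable _ _) hx1)
      rw [hcomp, lintegral_congr_ae hae, lintegral_indicator hA]
      simpa using hx2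

/-- Under (A.1)–(A.4), a set whose indicator is fixed π-a.e. by every kernel is π-trivial. -/
theorem stmt_19
    {X : Type*} [MetricSpace X] [CompleteSpace X] [TopologicalSpace.SeparableSpace X]
    [MeasurableSpace X] [BorelSpace X]
    (K : ℕ) (hK : 2 ≤ K)
    (Ks : ℕ → Kernel X X) [∀ k, IsMarkovKernel (Ks k)]
    (hper : ∀ k, Ks (k + K) = Ks k)
    (π ψ : Measure X) [IsProbabilityMeasure π] [IsProbabilityMeasure ψ]
    (Vs : ℕ → X → ℝ)
    (hA1 : ∀ k < K, IsStationaryKernel π (Ks k))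
    (hA2 : SweepIrreducible Ks K ψ)
    (hA3 : ∀ k < K, GeoDrift Ks K k (Vs k))
    (hA4 : ∀ k < K, IsAperiodic Ks K k ψ)
    (A : Set X) (hA : MeasurableSet A)
    (hfix : ∀ k < K,
      (fun x => kApp (Ks k) (A.indicator fun _ => (1:ℝ)) x)
        =ᵐ[π] A.indicator fun _ => (1:ℝ)) :
    π A = 0 ∨ π A = 1 := by
  by_cases h0 : π A = 0
  · exact Or.inl h0
  right
  by_contra h1
  have hKpos : 0 < K := by omega
  have hmod : ∀ k, Ks k = Ks (k % K) := by
    intro k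
    induction k using Nat.strong_induction_on with
    | _ k ih =>
      rcases lt_or_ge k K with h | h
      · rw [Nat.mod_eq_of_lt h]
      · have hk : k = (k - K) + K := (Nat.sub_add_cancel h).symm
        rw [hk, hper (k - K), ih (k - K) (by omega), Nat.add_mod_right]
  have hstat : ∀ k, IsStationaryKernel π (Ks k) := fun k => by
    rw [hmod k]; exact hA1 (k % K) (Nat.mod_lt _ hKpos)
  have hfix' : ∀ k, (fun x => (Ks k) x A) =ᵐ[π] A.indicator (fun _ => (1:ℝ≥0∞)) := by
    intro k
    rw [hmod k]
    filter_upwards [hfix (k % K) (Nat.mod_lt _ hKpos)] with x hx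
    have hx' : ((Ks (k % K)) x A).toReal = A.indicator (fun _ => (1:ℝ)) x := by
      have heq : kApp (Ks (k % K)) (A.indicator fun _ => (1:ℝ)) x
          = ((Ks (k % K)) x A).toReal := by
        simp only [kApp]
        rw [integral_indicator_const _ hA]; simp; rfl
      rw [← heq]; exact hx
    by_cases hxA : x ∈ A
    · simp only [Set.indicator_of_mem hxA] at hx' ⊢
      exact ENNReal.toReal_eq_one_iff _ |>.mp hx'
    · simp only [Set.indicator_of_notMem hxA] at hx' ⊢
      rcases (ENNReal.toReal_eq_zero_iff _).mp hx' with h | h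
      · exact h
      · exact absurd h (measure_ne_top _ _)
  have key := sweep_fix_key Ks π hstat A hA hfix'
  have hall : ∀ᵐ x ∂π, ∀ t : ℕ,
      (sweepKer Ks (K*t) 0) x A = A.indicator (fun _ => (1:ℝ≥0∞)) x :=
    ae_all_iff.mpr fun t => key (K*t) 0
  have hπAc : π Aᶜ ≠ 0 := fun h => h1 ((prob_compl_eq_zero_iff hA).mp h)
  have hψ : ψ A ≠ 0 ∨ ψ Aᶜ ≠ 0 := by
    by_contra h
    push_neg at h
    have hle := measure_union_le (μ := ψ) A Aᶜ
    rw [Set.union_compl_self, h.1, h.2, measure_univ] at hle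
    simp at hle
  rcases hψ with hψA | hψAc
  · have hgood : π (Aᶜ \ {x | ¬ ∀ t : ℕ,
        (sweepKer Ks (K*t) 0) x A = A.indicator (fun _ => (1:ℝ≥0∞)) x}) = π Aᶜ :=
      measure_diff_null (ae_iff.mp hall)
    obtain ⟨x, hxAc, hxP⟩ := nonempty_of_measure_ne_zero (hgood.trans_ne hπAc)
    simp only [Set.mem_setOf_eq, not_not] at hxP
    obtain ⟨t, ht, htpos⟩ := hA2 0 hKpos A hA (pos_iff_ne_zero.mpr hψA) x
    rw [hxP t, Set.indicator_of_notMem hxAc] at htpos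
    exact lt_irrefl 0 htpos
  · have hgood : π (A \ {x | ¬ ∀ t : ℕ,
        (sweepKer Ks (K*t) 0) x A = A.indicator (fun _ => (1:ℝ≥0∞)) x}) = π A :=
      measure_diff_null (ae_iff.mp hall)
    obtain ⟨x, hxA, hxP⟩ := nonempty_of_measure_ne_zero (hgood.trans_ne h0)
    simp only [Set.mem_setOf_eq, not_not] at hxP
    obtain ⟨t, ht, htpos⟩ := hA2 0 hKpos Aᶜ hA.compl (pos_iff_ne_zero.mpr hψAc) x
    haveI := sweepKer_markov Ks (K*t) 0
    have hone : (sweepKer Ks (K*t) 0) x A = 1 := by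
      rw [hxP t, Set.indicator_of_mem hxA]
    have hcz : (sweepKer Ks (K*t) 0) x Aᶜ = 0 := by
      rw [prob_compl_eq_one_sub hA, hone]; simp
    rw [hcz] at htpos
    exact lt_irrefl 0 htpos


end
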